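/- arXiv:2303.11612 — 2 statements merged into one kernel-verified Lean document; each statement's English description precedes it below -/
import Mathlib

section
/- (Structural perturbation bound for power-scheme projections.) Let A ∈ ℝ^{I×J}, let Q ∈ ℝ^{I×μ} have orthonormal columns, let R ∈ ℝ^{μ×(μ+K)}, F ∈ ℝ^{(μ+K)×J}, and G ∈ ℝ^{I×(μ+K)}, and let q ≥ 1 be an integer. Then ‖A − Q Q^T A‖_F^2 ≤ 2 ‖(A A^T)^q G F − A‖_F^2 + 2 ‖F‖_2^2 · ‖Q R − (A A^T)^q G‖_F^2. -/
/-!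
With `P = Q Qᵀ` and `B = (A Aᵀ)^q`, the identity `P Q R F = Q R F` (from `Qᵀ Q = 1`) gives
`A - P A = (1 - P)(A - B G F) + (1 - P)(B G - Q R) F`.
Since `1 - P` is an orthogonal projection it does not increase the Frobenius norm, and
`‖X F‖_F ≤ ‖X‖_F ‖F‖_2`; the bound follows from `‖X + Y‖² ≤ 2‖X‖² + 2‖Y‖²`.
-/

open Matrix

noncomputable section

/-- Frobenius norm of a real matrix. -/
def frob {m n : Type*} [Fintype m] [Fintype n] (A : Matrix m n ℝ) : ℝ :=
  Real.sqrt (∑ i, ∑ j, (A i j) ^ 2)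

/-- Spectral norm of a real matrix. -/
def spec {m n : Type*} [Fintype m] [Fintype n] [DecidableEq n] (A : Matrix m n ℝ) : ℝ :=
  ‖LinearMap.toContinuousLinearMap (Matrix.toEuclideanLin A)‖

variable {m n p : Type*} [Fintype m] [Fintype n] [Fintype p]

lemma frob_sq (A : Matrix m n ℝ) : frob A ^ 2 = ∑ i, ∑ j, A i j ^ 2 :=
  Real.sq_sqrt (by positivity)

lemma frob_nonneg (A : Matrix m n ℝ) : 0 ≤ frob A := Real.sqrt_nonneg _

lemma frob_sub_comm (A B : Matrix m n ℝ) : frob (A - B) = frob (B - A) := by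
  simp only [frob, Matrix.sub_apply, ← neg_sub (A _ _), neg_sq]

lemma frob_add_sq_le (A B : Matrix m n ℝ) :
    frob (A + B) ^ 2 ≤ 2 * frob A ^ 2 + 2 * frob B ^ 2 := by
  simp only [frob_sq, Finset.mul_sum, ← Finset.sum_add_distrib, Matrix.add_apply]
  gcongr with i _ j _
  linarith [add_sq_le (a := A i j) (b := B i j)]

lemma frob_sq_eq_sum_norm_sq (A : Matrix m n ℝ) :
    frob A ^ 2 = ∑ i, ‖WithLp.toLp 2 (A i)‖ ^ 2 := by
  simp [frob_sq, EuclideanSpace.norm_sq_eq]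

section Spectral

open scoped Matrix.Norms.L2Operator

lemma spec_eq_l2_opNorm [DecidableEq n] (A : Matrix m n ℝ) : spec A = ‖A‖ := rfl

lemma norm_vecMul_le_mul_spec [DecidableEq m] [DecidableEq n] (A : Matrix m n ℝ) (v : m → ℝ) :
    ‖WithLp.toLp 2 (v ᵥ* A)‖ ≤ ‖WithLp.toLp 2 v‖ * spec A := by
  rw [← mulVec_transpose, spec_eq_l2_opNorm, ← l2_opNorm_conjTranspose, mul_comm,
    conjTranspose_eq_transpose_of_trivial]
  exact l2_opNorm_mulVec Aᵀ (WithLp.toLp 2 v)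

end Spectral

lemma frob_mul_le_mul_spec [DecidableEq n] [DecidableEq p] (M : Matrix m n ℝ) (F : Matrix n p ℝ) :
    frob (M * F) ≤ frob M * spec F := by
  refine le_of_pow_le_pow_left₀ two_ne_zero (mul_nonneg (frob_nonneg M) (norm_nonneg _)) ?_
  rw [frob_sq_eq_sum_norm_sq, mul_pow, frob_sq_eq_sum_norm_sq, Finset.sum_mul]
  gcongr with i
  rw [← mul_pow]
  exact pow_le_pow_left₀ (norm_nonneg _) (norm_vecMul_le_mul_spec F (M i)) 2

lemma frob_sq_eq_trace (A : Matrix m n ℝ) : frob A ^ 2 = trace (Aᵀ * A) := by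
  rw [frob_sq, Finset.sum_comm]
  simp [trace, mul_apply, sq]

lemma frob_sq_sub_proj [DecidableEq p] (Q : Matrix m p ℝ) (hQ : Qᵀ * Q = 1) (M : Matrix m n ℝ) :
    frob (M - Q * Qᵀ * M) ^ 2 = frob M ^ 2 - frob (Qᵀ * M) ^ 2 := by
  have hQQ : ∀ X : Matrix p n ℝ, Qᵀ * (Q * X) = X := fun X => by
    rw [← Matrix.mul_assoc, hQ, Matrix.one_mul]
  simp only [frob_sq_eq_trace, transpose_sub, transpose_mul, transpose_transpose, Matrix.sub_mul,
    Matrix.mul_sub, Matrix.mul_assoc, hQQ, trace_sub]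
  ring

lemma frob_sub_proj_sq_le [DecidableEq p] (Q : Matrix m p ℝ) (hQ : Qᵀ * Q = 1)
    (M : Matrix m n ℝ) : frob (M - Q * Qᵀ * M) ^ 2 ≤ frob M ^ 2 := by
  rw [frob_sq_sub_proj Q hQ]
  exact sub_le_self _ (sq_nonneg _)

theorem stmt9_general {I J μ K : ℕ} (q : ℕ)
    (A : Matrix (Fin I) (Fin J) ℝ) (Q : Matrix (Fin I) (Fin μ) ℝ) (hQ : Qᵀ * Q = 1)
    (R : Matrix (Fin μ) (Fin (μ + K)) ℝ) (F : Matrix (Fin (μ + K)) (Fin J) ℝ)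
    (G : Matrix (Fin I) (Fin (μ + K)) ℝ) :
    frob (A - Q * Qᵀ * A) ^ 2 ≤
      2 * frob ((A * Aᵀ) ^ q * G * F - A) ^ 2 +
        2 * spec F ^ 2 * frob (Q * R - (A * Aᵀ) ^ q * G) ^ 2 := by
  set B := (A * Aᵀ) ^ q
  have hPQ : Q * Qᵀ * Q = Q := by rw [Matrix.mul_assoc, hQ, Matrix.mul_one]
  have hsplit : A - Q * Qᵀ * A = (A - B * G * F - Q * Qᵀ * (A - B * G * F)) +
      ((B * G - Q * R) * F - Q * Qᵀ * ((B * G - Q * R) * F)) := by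
    simp only [Matrix.mul_sub, Matrix.sub_mul, ← Matrix.mul_assoc, hPQ]
    abel
  have hU := frob_sub_proj_sq_le Q hQ (A - B * G * F)
  have hV := (frob_sub_proj_sq_le Q hQ ((B * G - Q * R) * F)).trans
    (pow_le_pow_left₀ (frob_nonneg _) (frob_mul_le_mul_spec (B * G - Q * R) F) 2)
  rw [mul_pow] at hV
  rw [hsplit, frob_sub_comm (B * G * F), frob_sub_comm (Q * R)]
  linarith [frob_add_sq_le (A - B * G * F - Q * Qᵀ * (A - B * G * F))
    ((B * G - Q * R) * F - Q * Qᵀ * ((B * G - Q * R) * F))]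

/-- Structural perturbation bound for power-scheme projections. -/
theorem stmt9 {I J μ K : ℕ} (q : ℕ) (hq : 1 ≤ q)
    (A : Matrix (Fin I) (Fin J) ℝ) (Q : Matrix (Fin I) (Fin μ) ℝ) (hQ : Qᵀ * Q = 1)
    (R : Matrix (Fin μ) (Fin (μ + K)) ℝ) (F : Matrix (Fin (μ + K)) (Fin J) ℝ)
    (G : Matrix (Fin I) (Fin (μ + K)) ℝ) :
    frob (A - Q * Qᵀ * A) ^ 2 ≤
      2 * frob ((A * Aᵀ) ^ q * G * F - A) ^ 2 +
        2 * spec F ^ 2 * frob (Q * R - (A * Aᵀ) ^ q * G) ^ 2 :=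
  stmt9_general q A Q hQ R F G

end
end

section
/- (Singular values under partial Tucker compression.) Let A ∈ ℝ^{I_1×⋯×I_N}, let Q_1,…,Q_{n−1} be matrices with orthonormal columns (Q_j ∈ ℝ^{I_j×μ_j}), and set B = A ×_1 Q_1^T ⋯ ×_{n−1} Q_{n−1}^T. Let A_(n) and B_(n) be the mode-n unfoldings. Then for every k, σ_k(B_(n)) ≤ σ_k(A_(n)), and consequently for every μ_n, ∑_{k>μ_n} σ_k(B_(n))^2 ≤ ∑_{k>μ_n} σ_k(A_(n))^2. -/
/-! A simultaneous mode product `B = A ×₁ C₁ ⋯ ×_N C_N` unfolds along mode `n` as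
`B_(n) = C_n A_(n) Kᵀ`, where `K` is the Kronecker product of the `C_m` with `m ≠ n`. The
compression is such a product, with `C_m = Q_mᵀ` on the compressed modes and identities
elsewhere; all these factors, hence `K`, have orthonormal rows, so `‖B_(n)ᵀ x‖ ≤ ‖A_(n)ᵀ x‖` and
the Gram matrix of `B_(n)` is dominated by that of `A_(n)`. Courant–Fischer then compares their
`k`-th eigenvalues: the span of the top `k + 1` eigenvectors of one meets the span of the bottom
`I_n - k` eigenvectors of the other. -/

open Matrix

noncomputable section

/-- Frobenius norm of a tensor (any finitely indexed real array). -/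
def tnorm {ι : Type*} [Fintype ι] (A : ι → ℝ) : ℝ :=
  Real.sqrt (∑ x, A x ^ 2)

/-- Mode-`n` product of a tensor with a square matrix (keeps the dimensions). -/
def tmul {N : ℕ} {I : Fin N → ℕ} (A : (∀ n, Fin (I n)) → ℝ) (n : Fin N)
    (B : Matrix (Fin (I n)) (Fin (I n)) ℝ) : (∀ m, Fin (I m)) → ℝ :=
  fun x => ∑ j : Fin (I n), B (x n) j * A (Function.update x n j)

/-- The multi-mode product `A ×₁ P 1 ×₂ P 2 ⋯ ×_N P N` with square matrices. -/
def multiProj {N : ℕ} {I : Fin N → ℕ} (A : (∀ n, Fin (I n)) → ℝ)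
    (P : ∀ n, Matrix (Fin (I n)) (Fin (I n)) ℝ) : (∀ n, Fin (I n)) → ℝ :=
  fun x => ∑ j : ∀ n, Fin (I n), (∏ n, P n (x n) (j n)) * A j

/-- Simultaneous compression `A ×_m (Q m)ᵀ` over all modes `m ∈ S`. -/
def compress {N : ℕ} {I μ : Fin N → ℕ} (A : (∀ n, Fin (I n)) → ℝ)
    (S : Finset (Fin N)) (Q : ∀ n, Matrix (Fin (I n)) (Fin (μ n)) ℝ) :
    (∀ m, Fin (if m ∈ S then μ m else I m)) → ℝ :=
  fun x => ∑ j : ∀ m : {m : Fin N // m ∈ S}, Fin (I m.val),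
    (∏ m : {m : Fin N // m ∈ S}, Q m.val (j m) (Fin.cast (if_pos m.property) (x m.val))) *
      A (fun m => if h : m ∈ S then j ⟨m, h⟩ else Fin.cast (if_neg h) (x m))

/-- Mode-`n` product of a tensor with a (possibly rectangular) matrix. -/
def modeProd {N : ℕ} {I : Fin N → ℕ} {J : ℕ} (A : (∀ n, Fin (I n)) → ℝ)
    (n : Fin N) (B : Matrix (Fin J) (Fin (I n)) ℝ) :
    (∀ m, Fin (Function.update I n J m)) → ℝ :=
  fun x => ∑ i : Fin (I n),
    B (Fin.cast (Function.update_self n J I) (x n)) i *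
      A (fun m => if h : m = n then Fin.cast (congrArg I h).symm i
                  else Fin.cast (Function.update_of_ne h J I) (x m))

/-- Mode-`n` unfolding of a tensor. -/
def unfold {N : ℕ} {D : Fin N → ℕ} (A : (∀ m, Fin (D m)) → ℝ) (n : Fin N) :
    Matrix (Fin (D n)) (∀ m : {m : Fin N // m ≠ n}, Fin (D m.val)) ℝ :=
  Matrix.of fun i x =>
    A (fun m => if h : m = n then Fin.cast (congrArg D h).symm i else x ⟨m, h⟩)

/-- `sv A k` is the `(k+1)`-st largest singular value of `A` (so `sv A 0` is the largest),
defined via the eigenvalues of `A * Aᴴ`, and `0` for `k` beyond the number of rows. -/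
def sv {m n : Type*} [Fintype m] [Fintype n] [DecidableEq m] (A : Matrix m n ℝ) : ℕ → ℝ :=
  fun k =>
    if h : k < Fintype.card m then
      let f : Fin (Fintype.card m) → ℝ := fun i =>
        (Matrix.isHermitian_mul_conjTranspose_self A).eigenvalues ((Fintype.equivFin m).symm i)
      Real.sqrt (f (Tuple.sort f (Fin.rev ⟨k, h⟩)))
    else 0

open Module Submodule RCLike
open scoped InnerProductSpace

namespace Orthonormal

variable {𝕜 E ι : Type*} [RCLike 𝕜] [NormedAddCommGroup E] [InnerProductSpace 𝕜 E] {v : ι → E}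

theorem inner_eq_zero_of_mem_span_image (hv : Orthonormal 𝕜 v) {s : Set ι} {i : ι} (hi : i ∉ s)
    {x : E} (hx : x ∈ span 𝕜 (v '' s)) : ⟪v i, x⟫_𝕜 = 0 := by
  suffices span 𝕜 (v '' s) ≤ LinearMap.ker (innerₛₗ 𝕜 (v i)) from this hx
  rw [span_le]
  rintro _ ⟨j, hj, rfl⟩
  exact hv.inner_eq_zero (ne_of_mem_of_not_mem hj hi).symm

theorem finrank_span_image (hv : Orthonormal 𝕜 v) (s : Finset ι) :
    finrank 𝕜 (span 𝕜 (v '' s)) = s.card := by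
  rw [Set.image_eq_range,
    finrank_span_eq_card (b := fun i : (s : Set ι) => v i)
      (hv.linearIndependent.comp _ Subtype.val_injective)]
  simp

end Orthonormal

namespace LinearMap.IsSymmetric

variable {𝕜 E : Type*} [RCLike 𝕜] [NormedAddCommGroup E] [InnerProductSpace 𝕜 E]
  [FiniteDimensional 𝕜 E] {T : E →ₗ[𝕜] E} {n : ℕ}

theorem re_inner_apply_self_eq_sum (hT : T.IsSymmetric) (hn : finrank 𝕜 E = n) (x : E) :
    re ⟪T x, x⟫_𝕜 = ∑ i, hT.eigenvalues hn i * ‖⟪hT.eigenvectorBasis hn i, x⟫_𝕜‖ ^ 2 := by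
  rw [← (hT.eigenvectorBasis hn).sum_inner_mul_inner, map_sum]
  refine Finset.sum_congr rfl fun i _ => ?_
  rw [hT, apply_eigenvectorBasis, inner_smul_right, ← inner_conj_symm, mul_assoc,
    RCLike.conj_mul, ← ofReal_pow, ← ofReal_mul, ofReal_re]

theorem re_inner_apply_self_le_of_mem_span (hT : T.IsSymmetric) (hn : finrank 𝕜 E = n)
    {s : Set (Fin n)} {r : ℝ} (hs : ∀ i ∈ s, hT.eigenvalues hn i ≤ r) {x : E}
    (hx : x ∈ span 𝕜 (hT.eigenvectorBasis hn '' s)) :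
    re ⟪T x, x⟫_𝕜 ≤ r * ‖x‖ ^ 2 := by
  rw [re_inner_apply_self_eq_sum hT hn, ← (hT.eigenvectorBasis hn).sum_sq_norm_inner_right,
    Finset.mul_sum]
  refine Finset.sum_le_sum fun i _ => ?_
  by_cases hi : i ∈ s
  · exact mul_le_mul_of_nonneg_right (hs i hi) (sq_nonneg _)
  · simp [(hT.eigenvectorBasis hn).orthonormal.inner_eq_zero_of_mem_span_image hi hx]

theorem le_re_inner_apply_self_of_mem_span (hT : T.IsSymmetric) (hn : finrank 𝕜 E = n)
    {s : Set (Fin n)} {r : ℝ} (hs : ∀ i ∈ s, r ≤ hT.eigenvalues hn i) {x : E}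
    (hx : x ∈ span 𝕜 (hT.eigenvectorBasis hn '' s)) :
    r * ‖x‖ ^ 2 ≤ re ⟪T x, x⟫_𝕜 := by
  rw [re_inner_apply_self_eq_sum hT hn, ← (hT.eigenvectorBasis hn).sum_sq_norm_inner_right,
    Finset.mul_sum]
  refine Finset.sum_le_sum fun i _ => ?_
  by_cases hi : i ∈ s
  · exact mul_le_mul_of_nonneg_right (hs i hi) (sq_nonneg _)
  · simp [(hT.eigenvectorBasis hn).orthonormal.inner_eq_zero_of_mem_span_image hi hx]

variable {F : Type*} [NormedAddCommGroup F] [InnerProductSpace 𝕜 F] [FiniteDimensional 𝕜 F]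

theorem eigenvalues_le_of_re_inner_le {S : F →ₗ[𝕜] F} (hS : S.IsSymmetric) (hT : T.IsSymmetric)
    {n' : ℕ} (hF : finrank 𝕜 F = n') (hn : finrank 𝕜 E = n) (φ : F →ₗᵢ[𝕜] E)
    (h : ∀ x, re ⟪S x, x⟫_𝕜 ≤ re ⟪T (φ x), φ x⟫_𝕜) (k : ℕ) (hk' : k < n') (hk : k < n) :
    hS.eigenvalues hF ⟨k, hk'⟩ ≤ hT.eigenvalues hn ⟨k, hk⟩ := by
  set b := hS.eigenvectorBasis hF
  set c := hT.eigenvectorBasis hn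
  have hUW : ¬ Disjoint (span 𝕜 (φ ∘ b '' (Finset.Iic ⟨k, hk'⟩ : Finset (Fin n'))))
      (span 𝕜 (c '' (Finset.Ici ⟨k, hk⟩ : Finset (Fin n)))) := by
    intro hdisj
    have := finrank_add_finrank_le_of_disjoint hdisj
    rw [(b.orthonormal.comp_linearIsometry φ).finrank_span_image,
      c.orthonormal.finrank_span_image, Fin.card_Iic, Fin.card_Ici, hn] at this
    omega
  obtain ⟨x, hxU, hxW, hx0⟩ : ∃ x ∈ span 𝕜 (φ ∘ b '' (Finset.Iic ⟨k, hk'⟩ : Finset (Fin n'))),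
      x ∈ span 𝕜 (c '' (Finset.Ici ⟨k, hk⟩ : Finset (Fin n))) ∧ x ≠ 0 := by
    simpa [disjoint_def] using hUW
  rw [Set.image_comp, ← LinearIsometry.coe_toLinearMap, span_image] at hxU
  obtain ⟨y, hy, rfl⟩ := mem_map.mp hxU
  have hlow := le_re_inner_apply_self_of_mem_span hS hF
    (fun i hi => hS.eigenvalues_antitone hF (Finset.mem_Iic.mp hi)) hy
  have hup := re_inner_apply_self_le_of_mem_span hT hn
    (fun i hi => hT.eigenvalues_antitone hn (Finset.mem_Ici.mp hi)) hxW
  have hy0 : 0 < ‖y‖ ^ 2 := by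
    have : y ≠ 0 := fun h => hx0 (by simp [h])
    positivity
  rw [LinearIsometry.coe_toLinearMap, φ.norm_map] at hup
  exact le_of_mul_le_mul_right ((hlow.trans (h y)).trans hup) hy0

end LinearMap.IsSymmetric

namespace Matrix

section EuclideanSpace

variable {𝕜 m n : Type*} [RCLike 𝕜] [Fintype m] [Fintype n] [DecidableEq m]

theorem inner_toEuclideanLin_conjTranspose [DecidableEq n] (A : Matrix m n 𝕜)
    (x : EuclideanSpace 𝕜 m) (y : EuclideanSpace 𝕜 n) :
    ⟪toEuclideanLin Aᴴ x, y⟫_𝕜 = ⟪x, toEuclideanLin A y⟫_𝕜 := by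
  rw [toEuclideanLin_conjTranspose_eq_adjoint, LinearMap.adjoint_inner_left]

theorem re_inner_toEuclideanLin_mul_conjTranspose_self (A : Matrix m n 𝕜)
    (x : EuclideanSpace 𝕜 m) :
    re ⟪toEuclideanLin (A * Aᴴ) x, x⟫_𝕜 = ‖toEuclideanLin Aᴴ x‖ ^ 2 := by
  classical
  rw [toLpLin_mul_same, LinearMap.comp_apply, ← inner_conj_symm,
    ← inner_toEuclideanLin_conjTranspose, conj_re, inner_self_eq_norm_sq]

theorem norm_toEuclideanLin_conjTranspose {P : Matrix m n 𝕜} (hP : P * Pᴴ = 1)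
    (x : EuclideanSpace 𝕜 m) : ‖toEuclideanLin Pᴴ x‖ = ‖x‖ := by
  classical
  have h : ⟪toEuclideanLin Pᴴ x, toEuclideanLin Pᴴ x⟫_𝕜 = ⟪x, x⟫_𝕜 := by
    rw [inner_toEuclideanLin_conjTranspose, ← LinearMap.comp_apply, ← toLpLin_mul_same, hP,
      toLpLin_one, LinearMap.id_apply]
  rw [@norm_eq_sqrt_re_inner 𝕜, h, ← @norm_eq_sqrt_re_inner 𝕜]

theorem norm_toEuclideanLin_le [DecidableEq n] {K : Matrix m n 𝕜} (hK : K * Kᴴ = 1)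
    (x : EuclideanSpace 𝕜 n) : ‖toEuclideanLin K x‖ ≤ ‖x‖ := by
  have h : ‖toEuclideanLin K x‖ ^ 2 ≤ ‖toEuclideanLin K x‖ * ‖x‖ := calc
    ‖toEuclideanLin K x‖ ^ 2 = re ⟪toEuclideanLin Kᴴ (toEuclideanLin K x), x⟫_𝕜 := by
      rw [inner_toEuclideanLin_conjTranspose, inner_self_eq_norm_sq]
    _ ≤ ‖toEuclideanLin Kᴴ (toEuclideanLin K x)‖ * ‖x‖ := re_inner_le_norm _ _
    _ = ‖toEuclideanLin K x‖ * ‖x‖ := by rw [norm_toEuclideanLin_conjTranspose hK]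
  nlinarith [norm_nonneg x, norm_nonneg (toEuclideanLin K x)]

end EuclideanSpace

section PiKronecker

variable {ι R : Type*} [Fintype ι] [CommSemiring R] {α β γ : ι → Type*}

def piKronecker (C : ∀ i, Matrix (α i) (β i) R) : Matrix (∀ i, α i) (∀ i, β i) R :=
  of fun x y => ∏ i, C i (x i) (y i)

theorem piKronecker_apply (C : ∀ i, Matrix (α i) (β i) R) (x : ∀ i, α i) (y : ∀ i, β i) :
    piKronecker C x y = ∏ i, C i (x i) (y i) :=
  rfl

theorem transpose_piKronecker (C : ∀ i, Matrix (α i) (β i) R) :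
    (piKronecker C)ᵀ = piKronecker fun i => (C i)ᵀ :=
  rfl

theorem piKronecker_mul [DecidableEq ι] [∀ i, Fintype (β i)] (C : ∀ i, Matrix (α i) (β i) R)
    (D : ∀ i, Matrix (β i) (γ i) R) :
    piKronecker C * piKronecker D = piKronecker fun i => C i * D i := by
  ext x z
  simp only [mul_apply, piKronecker_apply, ← Finset.prod_mul_distrib, Fintype.prod_sum]

theorem piKronecker_one [∀ i, DecidableEq (α i)] :
    piKronecker (fun i => (1 : Matrix (α i) (α i) R)) = 1 := by
  ext x y
  simp [piKronecker_apply, one_apply, Finset.prod_boole, funext_iff]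

theorem piKronecker_mul_transpose [DecidableEq ι] [∀ i, Fintype (β i)] [∀ i, DecidableEq (α i)]
    {C : ∀ i, Matrix (α i) (β i) R} (hC : ∀ i, C i * (C i)ᵀ = 1) :
    piKronecker C * (piKronecker C)ᵀ = 1 := by
  rw [transpose_piKronecker, piKronecker_mul]
  simp only [hC, piKronecker_one]

end PiKronecker

end Matrix

theorem Antitone.comp_perm_sort_rev {n : ℕ} {α : Type*} [LinearOrder α] {g : Fin n → α}
    (hg : Antitone g) (σ : Equiv.Perm (Fin n)) (k : Fin n) :
    (g ∘ σ) (Tuple.sort (g ∘ σ) k.rev) = g k := by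
  have hmono : Monotone (g ∘ Fin.rev) := hg.comp fun _ _ h => Fin.rev_le_rev.mpr h
  have hσ : g ∘ σ = (g ∘ Fin.rev) ∘ (σ.trans Fin.revPerm) := by
    funext i; simp
  have := congrFun (Tuple.comp_perm_comp_sort_eq_comp_sort (f := g ∘ Fin.rev)
    (σ := σ.trans Fin.revPerm)) k.rev
  rw [← hσ, (Tuple.sort_eq_refl_iff_monotone).mpr hmono] at this
  simpa using this

theorem Fintype.prod_piSplitAt_symm {ι M : Type*} [Fintype ι] [DecidableEq ι] [CommMonoid M]
    {β γ : ι → Type*} (F : ∀ i, β i → γ i → M) (i : ι) (a : β i) (x : ∀ j : {j // j ≠ i}, β j)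
    (b : γ i) (y : ∀ j : {j // j ≠ i}, γ j) :
    ∏ j, F j ((Equiv.piSplitAt i β).symm (a, x) j) ((Equiv.piSplitAt i γ).symm (b, y) j) =
      F i a b * ∏ j : {j // j ≠ i}, F j (x j) (y j) := by
  rw [Fintype.prod_eq_mul_prod_subtype_ne _ i]
  congr 1
  · simp
  · refine Finset.prod_congr rfl fun j _ => ?_
    simp [j.2]

section SingularValues

variable {m m' n α β : Type*} [Fintype m] [Fintype m'] [Fintype n] [Fintype α] [Fintype β]
  [DecidableEq m] [DecidableEq m']

theorem sv_eq_sqrt_eigenvalues₀ (A : Matrix m n ℝ) {k : ℕ} (hk : k < Fintype.card m) :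
    sv A k = √((isHermitian_mul_conjTranspose_self A).eigenvalues₀ ⟨k, hk⟩) := by
  rw [sv, dif_pos hk]
  exact congrArg Real.sqrt
    ((isHermitian_mul_conjTranspose_self A).eigenvalues₀_antitone.comp_perm_sort_rev
      ((Fintype.equivFin m).symm.trans (Fintype.equivOfCardEq (Fintype.card_fin _)).symm) _)

theorem sv_eq_zero {A : Matrix m n ℝ} {k : ℕ} (hk : Fintype.card m ≤ k) : sv A k = 0 :=
  dif_neg hk.not_gt

theorem sv_nonneg (A : Matrix m n ℝ) (k : ℕ) : 0 ≤ sv A k := by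
  unfold sv; split_ifs <;> positivity

theorem sv_le_sv_of_norm_le (X : Matrix m α ℝ) (Y : Matrix m' β ℝ)
    (φ : EuclideanSpace ℝ m' →ₗᵢ[ℝ] EuclideanSpace ℝ m)
    (h : ∀ x, ‖toEuclideanLin Yᴴ x‖ ≤ ‖toEuclideanLin Xᴴ (φ x)‖) (k : ℕ) :
    sv Y k ≤ sv X k := by
  classical
  rcases lt_or_ge k (Fintype.card m') with hk | hk
  · have hcard : Fintype.card m' ≤ Fintype.card m := by
      simpa using LinearMap.finrank_le_finrank_of_injective φ.injective
    have hk' := hk.trans_le hcard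
    rw [sv_eq_sqrt_eigenvalues₀ _ hk, sv_eq_sqrt_eigenvalues₀ _ hk']
    gcongr
    refine LinearMap.IsSymmetric.eigenvalues_le_of_re_inner_le _ _ _ _ φ (fun x => ?_) k hk hk'
    rw [re_inner_toEuclideanLin_mul_conjTranspose_self,
      re_inner_toEuclideanLin_mul_conjTranspose_self]
    gcongr
    exact h x
  · rw [sv_eq_zero hk]
    exact sv_nonneg _ _

theorem sv_mul_mul_transpose_le [DecidableEq β] {P : Matrix m' m ℝ} {K : Matrix β α ℝ}
    (hP : P * Pᵀ = 1) (hK : K * Kᵀ = 1) (X : Matrix m α ℝ) (k : ℕ) :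
    sv (P * X * Kᵀ) k ≤ sv X k := by
  classical
  rw [← conjTranspose_eq_transpose_of_trivial] at hP hK
  refine sv_le_sv_of_norm_le X _
    { toLinearMap := toEuclideanLin Pᴴ, norm_map' := norm_toEuclideanLin_conjTranspose hP }
    (fun x => ?_) k
  rw [conjTranspose_mul, conjTranspose_mul, conjTranspose_eq_transpose_of_trivial Kᵀ,
    transpose_transpose, toLpLin_mul_same, LinearMap.comp_apply,
    toLpLin_mul_same, LinearMap.comp_apply]
  exact norm_toEuclideanLin_le hK _

end SingularValues

section Tucker

variable {N : ℕ}

theorem unfold_apply_eq {D : Fin N → ℕ} (A : (∀ m, Fin (D m)) → ℝ) (n : Fin N) (i : Fin (D n))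
    (y : ∀ m : {m // m ≠ n}, Fin (D m)) :
    unfold A n i y = A ((Equiv.piSplitAt n _).symm (i, y)) := by
  refine congrArg A (funext fun m => ?_)
  by_cases h : m = n
  · subst h; simp
  · simp [h]

theorem unfold_piKronecker_mulVec {D D' : Fin N → ℕ}
    (C : ∀ m, Matrix (Fin (D' m)) (Fin (D m)) ℝ) (A : (∀ m, Fin (D m)) → ℝ) (n : Fin N) :
    unfold (piKronecker C *ᵥ A) n =
      C n * unfold A n * (piKronecker fun m : {m // m ≠ n} => C m)ᵀ := by
  ext i x
  simp only [unfold_apply_eq, mulVec, dotProduct, mul_apply, transpose_apply, piKronecker_apply]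
  rw [← (Equiv.piSplitAt n _).symm.sum_comp, Fintype.sum_prod_type]
  simp only [Finset.sum_mul]
  rw [Finset.sum_comm]
  refine Finset.sum_congr rfl fun y _ => Finset.sum_congr rfl fun a _ => ?_
  rw [Fintype.prod_piSplitAt_symm (fun m => C m)]
  ring

variable {I μ : Fin N → ℕ}

def compressFactor (S : Finset (Fin N)) (Q : ∀ m, Matrix (Fin (I m)) (Fin (μ m)) ℝ) (m : Fin N) :
    Matrix (Fin (if m ∈ S then μ m else I m)) (Fin (I m)) ℝ :=
  if h : m ∈ S then (Q m)ᵀ.submatrix (Fin.cast (if_pos h)) id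
  else (1 : Matrix (Fin (I m)) (Fin (I m)) ℝ).submatrix (Fin.cast (if_neg h)) id

theorem compressFactor_mul_transpose {S : Finset (Fin N)}
    {Q : ∀ m, Matrix (Fin (I m)) (Fin (μ m)) ℝ} {m : Fin N} (hQ : m ∈ S → (Q m)ᵀ * Q m = 1) :
    compressFactor S Q m * (compressFactor S Q m)ᵀ = 1 := by
  unfold compressFactor
  split_ifs with h
  · rw [transpose_submatrix, ← submatrix_mul _ _ _ _ _ Function.bijective_id, transpose_transpose,
      hQ h, submatrix_one _ (Fin.cast_injective _)]
  · rw [transpose_submatrix, ← submatrix_mul _ _ _ _ _ Function.bijective_id, transpose_one,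
      Matrix.one_mul, submatrix_one _ (Fin.cast_injective _)]

theorem compress_eq_piKronecker_mulVec (A : (∀ m, Fin (I m)) → ℝ) (S : Finset (Fin N))
    (Q : ∀ m, Matrix (Fin (I m)) (Fin (μ m)) ℝ) :
    compress A S Q = piKronecker (compressFactor S Q) *ᵥ A := by
  funext x
  simp only [compress, mulVec, dotProduct, piKronecker_apply]
  rw [← (Equiv.piEquivPiSubtypeProd (· ∈ S) _).symm.sum_comp, Fintype.sum_prod_type]
  refine Finset.sum_congr rfl fun j _ => ?_
  set x₀ : ∀ m : {m // m ∉ S}, Fin (I m) := fun m => Fin.cast (if_neg m.2) (x m)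
  have hfactor : ∀ y, ∏ m, compressFactor S Q m (x m)
        ((Equiv.piEquivPiSubtypeProd (· ∈ S) _).symm (j, y) m) =
      (∏ m : {m // m ∈ S}, Q m (j m) (Fin.cast (if_pos m.2) (x m))) * (1 : Matrix _ _ ℝ) x₀ y := by
    intro y
    rw [← Fintype.prod_subtype_mul_prod_subtype (· ∈ S), ← piKronecker_one, piKronecker_apply]
    -- `congr!` identifies the two (propositionally equal) `Fintype` instances on each subtype
    congr 1 <;> refine Finset.prod_congr (by congr!) fun m _ => ?_
    · simp [compressFactor, m.2]
    · simp [compressFactor, m.2]; rfl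
  simp only [hfactor, one_apply, mul_ite, mul_one, mul_zero, ite_mul, zero_mul,
    Finset.sum_ite_eq, Finset.mem_univ, if_true]
  rfl

theorem sv_unfold_compress_le (A : (∀ m, Fin (I m)) → ℝ) (S : Finset (Fin N))
    (Q : ∀ m, Matrix (Fin (I m)) (Fin (μ m)) ℝ) (hQ : ∀ m ∈ S, (Q m)ᵀ * Q m = 1) (n : Fin N)
    (k : ℕ) : sv (unfold (compress A S Q) n) k ≤ sv (unfold A n) k := by
  have hC : ∀ m, compressFactor S Q m * (compressFactor S Q m)ᵀ = 1 :=
    fun m => compressFactor_mul_transpose (hQ m)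
  rw [compress_eq_piKronecker_mulVec, unfold_piKronecker_mulVec]
  exact sv_mul_mul_transpose_le (hC n) (piKronecker_mul_transpose fun m : {m // m ≠ n} => hC m) _ k

end Tucker

/-- Singular values under partial Tucker compression: if
`B = A ×₁ Q₁ᵀ ⋯ ×_{n−1} Q_{n−1}ᵀ` with each `Q_m` having orthonormal columns, then every
singular value of the mode-`n` unfolding of `B` is at most the corresponding singular
value of the mode-`n` unfolding of `A`, and the tail sums of squares are dominated too. -/
theorem stmt13 {N : ℕ} {I μ : Fin N → ℕ} (A : (∀ m, Fin (I m)) → ℝ) (n : Fin N)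
    (Q : ∀ m, Matrix (Fin (I m)) (Fin (μ m)) ℝ)
    (hQ : ∀ m ∈ Finset.Iio n, (Q m)ᵀ * Q m = 1) :
    (∀ k : ℕ, sv (unfold (compress A (Finset.Iio n) Q) n) k ≤ sv (unfold A n) k) ∧
    ∀ μn : ℕ, ∑ k ∈ Finset.Ico μn (I n), sv (unfold (compress A (Finset.Iio n) Q) n) k ^ 2 ≤
      ∑ k ∈ Finset.Ico μn (I n), sv (unfold A n) k ^ 2 := by
  have hsv := sv_unfold_compress_le A (Finset.Iio n) Q hQ n
  exact ⟨hsv, fun μn => Finset.sum_le_sum fun k _ => pow_le_pow_left₀ (sv_nonneg _ k) (hsv k) 2⟩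

end
end
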